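/- arXiv:2402.00377 — 4 statements merged into one kernel-verified Lean document; each statement's English description precedes it below -/
import Mathlib

section
/- Let α ∈ (0,1) and let x̄ be a stationary point of f satisfying strict complementarity, i.e., ∇h(x̄)ᵢ ∈ (−μ, μ) for every i with x̄ᵢ = 0. Let h̃(x) = h(x) − ⟨∇h(x̄), x − x̄⟩ and I = {i : x̄ᵢ ≠ 0}. Then f satisfies the KL property at x̄ with exponent α if and only if there exist c, r > 0 such that for every x ∈ ℝⁿ with ‖x − x̄‖ < r, 0 < h̃(x) − h̃(x̄) < r, and xᵢ = x̄ᵢ for all i ∉ I, it holds that ‖(∇h̃(x))_I‖ ≥ c·(h̃(x) − h̃(x̄))^α, where (∇h̃(x))_I is the subvector of ∇h̃(x) indexed by I. -/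
/-!
Near `x̄` the coordinates in `I` keep their sign and, by strict complementarity, there is `ρ > 0`
with `|∇h(x)ᵢ| + ρ < μ` for `i ∉ I`. On the face `{x | xᵢ = 0 for i ∉ I}` stationarity turns
`μ‖x‖₁ - μ‖x̄‖₁` into `-⟨∇h(x̄), x - x̄⟩`, so `f(x) - f(x̄) = h̃(x) - h̃(x̄)`, and the coordinates
outside `I` of a subgradient can be made zero, so `dist(0, ∂f(x)) = ‖(∇h̃(x))_I‖`. Off the face some
`xᵢ ≠ 0` with `i ∉ I`, which forces `|vᵢ| ≥ ρ` for every `v ∈ ∂f(x)`; a uniform lower bound `ρ`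
dominates `c (f(x) - f(x̄))^α` once `f(x) - f(x̄)` is small, so the two inequalities are equivalent.
-/

open Filter Topology Metric Finset

namespace Real

lemma abs_eq_sign_mul_self (a : ℝ) : |a| = sign a * a := by
  rcases lt_trichotomy a 0 with ha | rfl | ha
  · rw [abs_of_neg ha, sign_of_neg ha]; ring
  · simp
  · rw [abs_of_pos ha, sign_of_pos ha, one_mul]

lemma abs_sub_abs_of_sign_eq {a b : ℝ} (h : sign a = sign b) : |a| - |b| = sign b * (a - b) := by
  rw [abs_eq_sign_mul_self a, abs_eq_sign_mul_self b, h, mul_sub]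

lemma abs_sign_of_ne_zero {a : ℝ} (ha : a ≠ 0) : |sign a| = 1 := by
  rcases sign_apply_eq_of_ne_zero a ha with h | h <;> simp [h]

lemma eventually_sign_eq {b : ℝ} (hb : b ≠ 0) : ∀ᶠ a in 𝓝 b, sign a = sign b := by
  rcases hb.lt_or_gt with hb | hb
  · filter_upwards [eventually_lt_nhds hb] with a ha
    rw [sign_of_neg ha, sign_of_neg hb]
  · filter_upwards [eventually_gt_nhds hb] with a ha
    rw [sign_of_pos ha, sign_of_pos hb]

end Real

lemma exists_pos_add_lt {ι : Type*} [Finite ι] {p : ι → Prop} {a b : ι → ℝ}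
    (h : ∀ i, p i → a i < b i) : ∃ ρ > 0, ∀ i, p i → a i + ρ < b i := by
  have : ∀ᶠ ρ in 𝓝 (0 : ℝ), ∀ i, p i → a i + ρ < b i := eventually_all.2 fun i => by
    by_cases hi : p i
    · filter_upwards [eventually_lt_nhds (sub_pos.2 (h i hi))] with ρ hρ _
      linarith
    · exact .of_forall fun _ hp => absurd hp hi
  exact this.exists_gt

lemma gradient_sub_inner_sub {E : Type*} [NormedAddCommGroup E] [InnerProductSpace ℝ E]
    [CompleteSpace E] {h : E → ℝ} {x : E} (hd : DifferentiableAt ℝ h x) (g x₀ : E) :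
    gradient (fun y => h y - inner ℝ g (y - x₀)) x = gradient h x - g := by
  have hlin : HasFDerivAt (fun y => inner ℝ g (y - x₀)) (InnerProductSpace.toDual ℝ E g) x := by
    simpa [inner_sub_right] using
      ((InnerProductSpace.toDual ℝ E g).hasFDerivAt (x := x)).sub_const (inner ℝ g x₀)
  refine HasGradientAt.gradient ?_
  rw [hasGradientAt_iff_hasFDerivAt, map_sub]
  exact (hasGradientAt_iff_hasFDerivAt.1 hd.hasGradientAt).sub hlin

section KL

variable {E : Type*} [SeminormedAddCommGroup E] {F H Φ D : E → ℝ} {P : E → Prop} {x₀ : E}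
  {α ρ : ℝ}

lemma restricted_kl_of_kl
    (hnear : ∀ᶠ x in 𝓝 x₀, P x → F x - F x₀ = H x - H x₀ ∧ Φ x ≤ D x)
    (hKL : ∃ c > (0 : ℝ), ∃ ε > (0 : ℝ), ∃ ν > (0 : ℝ), ∀ x, ‖x - x₀‖ < ε →
      0 < F x - F x₀ → F x - F x₀ < ν → c * (F x - F x₀) ^ α ≤ Φ x) :
    ∃ c > (0 : ℝ), ∃ r > (0 : ℝ), ∀ x, ‖x - x₀‖ < r →
      0 < H x - H x₀ → H x - H x₀ < r → P x → c * (H x - H x₀) ^ α ≤ D x := by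
  obtain ⟨c, hc, ε, hε, ν, hν, hKL⟩ := hKL
  obtain ⟨δ, hδ, hball⟩ := Metric.eventually_nhds_iff_ball.1 hnear
  refine ⟨c, hc, min (min ε ν) δ, by positivity, fun x hx hpos hlt hP => ?_⟩
  simp only [lt_min_iff] at hx hlt
  obtain ⟨hFH, hΦD⟩ := hball x (mem_ball_iff_norm.2 hx.2) hP
  rw [← hFH] at hpos hlt ⊢
  exact (hKL x hx.1.1 hpos hlt.1.2).trans hΦD

lemma kl_of_restricted_kl (hα : 0 ≤ α) (hρ : 0 < ρ)
    (hnear : ∀ᶠ x in 𝓝 x₀, (P x → F x - F x₀ = H x - H x₀ ∧ D x ≤ Φ x) ∧ (¬P x → ρ ≤ Φ x))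
    (hres : ∃ c > (0 : ℝ), ∃ r > (0 : ℝ), ∀ x, ‖x - x₀‖ < r →
      0 < H x - H x₀ → H x - H x₀ < r → P x → c * (H x - H x₀) ^ α ≤ D x) :
    ∃ c > (0 : ℝ), ∃ ε > (0 : ℝ), ∃ ν > (0 : ℝ), ∀ x, ‖x - x₀‖ < ε →
      0 < F x - F x₀ → F x - F x₀ < ν → c * (F x - F x₀) ^ α ≤ Φ x := by
  obtain ⟨c, hc, r, hr, hres⟩ := hres
  obtain ⟨δ, hδ, hball⟩ := Metric.eventually_nhds_iff_ball.1 hnear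
  have hrα : 0 < r ^ α := Real.rpow_pos_of_pos hr α
  refine ⟨min c (ρ / r ^ α), lt_min hc (div_pos hρ hrα), min r δ, lt_min hr hδ, r, hr,
    fun x hx hpos hlt => ?_⟩
  rw [lt_min_iff] at hx
  obtain ⟨hface, hoff⟩ := hball x (mem_ball_iff_norm.2 hx.2)
  by_cases hP : P x
  · obtain ⟨hFH, hDΦ⟩ := hface hP
    rw [hFH] at hpos hlt ⊢
    calc min c (ρ / r ^ α) * (H x - H x₀) ^ α ≤ c * (H x - H x₀) ^ α := by
          gcongr
          exact min_le_left _ _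
      _ ≤ Φ x := (hres x hx.1 hpos hlt hP).trans hDΦ
  · calc min c (ρ / r ^ α) * (F x - F x₀) ^ α ≤ ρ / r ^ α * r ^ α := by
          gcongr
          exact min_le_right _ _
      _ = ρ := div_mul_cancel₀ ρ hrα.ne'
      _ ≤ Φ x := hoff hP

theorem kl_iff_restricted_kl (hα : 0 ≤ α) (hρ : 0 < ρ)
    (hnear : ∀ᶠ x in 𝓝 x₀, (P x → F x - F x₀ = H x - H x₀ ∧ Φ x = D x) ∧ (¬P x → ρ ≤ Φ x)) :
    (∃ c > (0 : ℝ), ∃ ε > (0 : ℝ), ∃ ν > (0 : ℝ), ∀ x, ‖x - x₀‖ < ε →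
      0 < F x - F x₀ → F x - F x₀ < ν → c * (F x - F x₀) ^ α ≤ Φ x) ↔
    ∃ c > (0 : ℝ), ∃ r > (0 : ℝ), ∀ x, ‖x - x₀‖ < r →
      0 < H x - H x₀ → H x - H x₀ < r → P x → c * (H x - H x₀) ^ α ≤ D x :=
  ⟨restricted_kl_of_kl (hnear.mono fun _ hx hP => ⟨(hx.1 hP).1, (hx.1 hP).2.le⟩),
    kl_of_restricted_kl hα hρ
      (hnear.mono fun _ hx => ⟨fun hP => ⟨(hx.1 hP).1, (hx.1 hP).2.ge⟩, hx.2⟩)⟩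

end KL

namespace EuclideanSpace

variable {ι : Type*} [Fintype ι]

lemma sqrt_sum_sq_le_norm (v : EuclideanSpace ℝ ι) (s : Finset ι) : √(∑ i ∈ s, v i ^ 2) ≤ ‖v‖ := by
  simp only [EuclideanSpace.norm_eq, Real.norm_eq_abs, sq_abs]
  exact Real.sqrt_le_sqrt (sum_le_univ_sum_of_nonneg fun i => sq_nonneg (v i))

lemma norm_eq_sqrt_sum_sq_of_eq_zero {v : EuclideanSpace ℝ ι} {s : Finset ι}
    (hv : ∀ i ∉ s, v i = 0) : ‖v‖ = √(∑ i ∈ s, v i ^ 2) := by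
  rw [EuclideanSpace.norm_eq, ← sum_subset (subset_univ s) fun i _ hi => by simp [hv i hi]]
  simp

end EuclideanSpace

section L1

variable {ι : Type*}

/-- `∂(h + μ‖·‖₁)(x)`, for `G = ∇h(x)`. -/
def l1RegSubdiff (G : EuclideanSpace ℝ ι) (μ : ℝ) (x : EuclideanSpace ℝ ι) :
    Set (EuclideanSpace ℝ ι) :=
  {v | ∃ ξ : EuclideanSpace ℝ ι,
    (∀ i, (x i ≠ 0 → ξ i = Real.sign (x i)) ∧ (x i = 0 → ξ i ∈ Set.Icc (-1 : ℝ) 1)) ∧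
    v = G + μ • ξ}

variable {G x : EuclideanSpace ℝ ι} {μ : ℝ}

lemma l1RegSubdiff_nonempty : (l1RegSubdiff G μ x).Nonempty :=
  ⟨_, WithLp.toLp 2 fun i => Real.sign (x i), fun i => ⟨fun _ => rfl, fun hx => by simp [hx]⟩, rfl⟩

lemma apply_of_mem_l1RegSubdiff {v : EuclideanSpace ℝ ι} (hv : v ∈ l1RegSubdiff G μ x) {i : ι}
    (hi : x i ≠ 0) : v i = G i + μ * Real.sign (x i) := by
  obtain ⟨ξ, hξ, rfl⟩ := hv
  simp [(hξ i).1 hi]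

lemma exists_mem_l1RegSubdiff_eq_zero (hG : ∀ i, x i = 0 → |G i| ≤ μ) :
    ∃ v ∈ l1RegSubdiff G μ x, ∀ i, x i = 0 → v i = 0 := by
  refine ⟨_, ⟨WithLp.toLp 2 fun i => if x i = 0 then -G i / μ else Real.sign (x i),
    fun i => ⟨fun hi => by simp [hi], fun hi => ?_⟩, rfl⟩, fun i hi => ?_⟩
  · have hμ : 0 ≤ μ := (abs_nonneg _).trans (hG i hi)
    simpa [hi, ← abs_le, abs_div, abs_of_nonneg hμ] using div_le_one_of_le₀ (hG i hi) hμ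
  · rcases eq_or_ne μ 0 with rfl | hμ
    · simpa [hi] using hG i hi
    · simp [hi, mul_div_cancel₀ _ hμ]

lemma infDist_l1RegSubdiff [Fintype ι] (hG : ∀ i, x i = 0 → |G i| ≤ μ) :
    infDist 0 (l1RegSubdiff G μ x) =
      √(∑ i ∈ univ.filter (fun i => x i ≠ 0), (G i + μ * Real.sign (x i)) ^ 2) := by
  set s := univ.filter fun i => x i ≠ 0
  have hsum : ∀ v ∈ l1RegSubdiff G μ x,
      ∑ i ∈ s, (G i + μ * Real.sign (x i)) ^ 2 = ∑ i ∈ s, v i ^ 2 := fun v hv =>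
    sum_congr rfl fun i hi => by rw [apply_of_mem_l1RegSubdiff hv (mem_filter.1 hi).2]
  obtain ⟨v, hv, hv0⟩ := exists_mem_l1RegSubdiff_eq_zero hG
  apply le_antisymm
  · rw [hsum v hv,
      ← EuclideanSpace.norm_eq_sqrt_sum_sq_of_eq_zero fun i hi => hv0 i (by simpa [s] using hi),
      ← dist_zero_left]
    exact infDist_le_dist_of_mem hv
  · refine (le_infDist l1RegSubdiff_nonempty).2 fun v hv => ?_
    rw [hsum v hv, dist_zero_left]
    exact EuclideanSpace.sqrt_sum_sq_le_norm v s

lemma le_infDist_l1RegSubdiff [Fintype ι] {ρ : ℝ} {i : ι} (hi : x i ≠ 0) (hG : |G i| + ρ ≤ μ) :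
    ρ ≤ infDist 0 (l1RegSubdiff G μ x) := by
  refine (le_infDist l1RegSubdiff_nonempty).2 fun v hv => ?_
  have hμ : |μ * Real.sign (x i)| = |μ| := by rw [abs_mul, Real.abs_sign_of_ne_zero hi, mul_one]
  calc ρ ≤ |μ * Real.sign (x i)| - |G i| := by linarith [le_abs_self μ]
    _ ≤ |G i + μ * Real.sign (x i)| := by
        simpa [add_comm] using abs_sub_abs_le_abs_sub (μ * Real.sign (x i)) (-G i)
    _ = |v i| := by rw [apply_of_mem_l1RegSubdiff hv hi]
    _ ≤ dist 0 v := by simpa using PiLp.norm_apply_le v i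

end L1

section Stationary

variable {ι : Type*} [Fintype ι] {μ : ℝ} {g x x₀ : EuclideanSpace ℝ ι}

lemma eventually_sign_eq (x₀ : EuclideanSpace ℝ ι) :
    ∀ᶠ x in 𝓝 x₀, ∀ i, x₀ i ≠ 0 → Real.sign (x i) = Real.sign (x₀ i) :=
  eventually_all.2 fun i => by
    by_cases hi : x₀ i = 0
    · exact .of_forall fun _ h => absurd hi h
    · filter_upwards [(PiLp.continuous_apply 2 _ i).continuousAt.eventually
        (Real.eventually_sign_eq hi)] with x hx _ using hx

lemma exists_pos_eventually_abs_add_lt {E : Type*} [TopologicalSpace E]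
    {G : E → EuclideanSpace ℝ ι} {y₀ : E} {p : ι → Prop} (hG : ContinuousAt G y₀)
    (hlt : ∀ i, p i → |G y₀ i| < μ) : ∃ ρ > 0, ∀ᶠ y in 𝓝 y₀, ∀ i, p i → |G y i| + ρ < μ := by
  obtain ⟨ρ, hρ, hρμ⟩ := exists_pos_add_lt hlt
  refine ⟨ρ, hρ, eventually_all.2 fun i => ?_⟩
  by_cases hi : p i
  · have hcont : ContinuousAt (fun y => |G y i| + ρ) y₀ :=
      ((continuous_abs.comp (PiLp.continuous_apply 2 _ i)).continuousAt.comp hG).add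
        continuousAt_const
    filter_upwards [hcont.eventually_lt continuousAt_const (hρμ i hi)] with y hy _ using hy
  · exact .of_forall fun _ h => absurd h hi

lemma l1_sub_eq_neg_inner (hg : ∀ i, x₀ i ≠ 0 → g i = -μ * Real.sign (x₀ i))
    (hs : ∀ i, x₀ i ≠ 0 → Real.sign (x i) = Real.sign (x₀ i)) (hz : ∀ i, x₀ i = 0 → x i = 0) :
    μ * ∑ i, |x i| - μ * ∑ i, |x₀ i| = -inner ℝ g (x - x₀) := by
  rw [PiLp.inner_apply, mul_sum, mul_sum, ← sum_sub_distrib, ← sum_neg_distrib]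
  refine sum_congr rfl fun i _ => ?_
  by_cases hi : x₀ i = 0
  · simp [hi, hz i hi]
  · rw [← mul_sub, Real.abs_sub_abs_of_sign_eq (hs i hi), hg i hi]
    simp only [PiLp.sub_apply, RCLike.inner_apply, conj_trivial]
    ring

lemma infDist_l1RegSubdiff_of_sign_eq {G : EuclideanSpace ℝ ι}
    (hg : ∀ i, x₀ i ≠ 0 → g i = -μ * Real.sign (x₀ i))
    (hs : ∀ i, x₀ i ≠ 0 → Real.sign (x i) = Real.sign (x₀ i)) (hz : ∀ i, x₀ i = 0 → x i = 0)
    (hG : ∀ i, x₀ i = 0 → |G i| ≤ μ) :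
    infDist 0 (l1RegSubdiff G μ x) = √(∑ i ∈ univ.filter (fun i => x₀ i ≠ 0), (G - g) i ^ 2) := by
  have hx : ∀ i, x i ≠ 0 ↔ x₀ i ≠ 0 := fun i =>
    ⟨fun hxi hi => hxi (hz i hi), fun hi hxi => hi <| by
      simpa [hxi, eq_comm (a := (0 : ℝ))] using hs i hi⟩
  rw [infDist_l1RegSubdiff fun i hi => hG i (not_imp_not.1 (hx i).2 hi),
    filter_congr fun i _ => hx i]
  refine congrArg _ (sum_congr rfl fun i hi => ?_)
  rw [hs i (mem_filter.1 hi).2, PiLp.sub_apply, hg i (mem_filter.1 hi).2]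
  ring

end Stationary

theorem stmt13_general (n : ℕ)
    (h : EuclideanSpace ℝ (Fin n) → ℝ) (hh : ContDiff ℝ 2 h)
    (μ : ℝ)
    (f : EuclideanSpace ℝ (Fin n) → ℝ)
    (hf : f = fun x => h x + μ * ∑ i, |x i|)
    (xb : EuclideanSpace ℝ (Fin n))
    (hstat : ∀ i : Fin n,
      (xb i ≠ 0 → gradient h xb i = -μ * Real.sign (xb i)) ∧
      (xb i = 0 → gradient h xb i ∈ Set.Ioo (-μ) μ))
    (htil : EuclideanSpace ℝ (Fin n) → ℝ)
    (hhtil : htil = fun x => h x - (inner ℝ (gradient h xb) (x - xb) : ℝ))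
    (α : ℝ) (hα : α ∈ Set.Ioo (0 : ℝ) 1) :
    ((∃ c > (0 : ℝ), ∃ ε > (0 : ℝ), ∃ ν > (0 : ℝ), ∀ x : EuclideanSpace ℝ (Fin n),
        ‖x - xb‖ < ε → 0 < f x - f xb → f x - f xb < ν →
        c * (f x - f xb) ^ α ≤
          Metric.infDist (0 : EuclideanSpace ℝ (Fin n))
            {v | ∃ ξ : EuclideanSpace ℝ (Fin n),
              (∀ i, (x i ≠ 0 → ξ i = Real.sign (x i)) ∧
                (x i = 0 → ξ i ∈ Set.Icc (-1 : ℝ) 1)) ∧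
              v = gradient h x + μ • ξ}) ↔
     (∃ c > (0 : ℝ), ∃ r > (0 : ℝ), ∀ x : EuclideanSpace ℝ (Fin n),
        ‖x - xb‖ < r → 0 < htil x - htil xb → htil x - htil xb < r →
        (∀ i, xb i = 0 → x i = xb i) →
        c * (htil x - htil xb) ^ α ≤
          Real.sqrt (∑ i ∈ Finset.univ.filter (fun i => xb i ≠ 0),
            (gradient htil x i) ^ 2))) := by
  have hd : Differentiable ℝ h := hh.differentiable two_ne_zero
  have hgrad_cont : Continuous (gradient h) :=
    (InnerProductSpace.toDual ℝ _).symm.continuous.comp (hh.continuous_fderiv two_ne_zero)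
  obtain ⟨ρ, hρ, hgrad_lt⟩ :=
    exists_pos_eventually_abs_add_lt hgrad_cont.continuousAt fun i hi => abs_lt.2 ((hstat i).2 hi)
  refine kl_iff_restricted_kl hα.1.le hρ ?_
  filter_upwards [eventually_sign_eq xb, hgrad_lt] with x hs hlt
  refine ⟨fun hface => ?_, fun hoff => ?_⟩
  · have hz : ∀ i, xb i = 0 → x i = 0 := fun i hi => (hface i hi).trans hi
    have hl1 := l1_sub_eq_neg_inner (fun i hi => (hstat i).1 hi) hs hz
    refine ⟨by simp only [hf, hhtil, sub_self, inner_zero_right]; linarith, ?_⟩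
    rw [hhtil, gradient_sub_inner_sub (hd x)]
    exact infDist_l1RegSubdiff_of_sign_eq (fun i hi => (hstat i).1 hi) hs hz
      fun i hi => by linarith [hlt i hi]
  · push Not at hoff
    obtain ⟨i, hi, hxi⟩ := hoff
    exact le_infDist_l1RegSubdiff (hi ▸ hxi) (hlt i hi).le

/-- Let `x̄` be a stationary point of `f = h + μ‖·‖₁` satisfying
strict complementarity. With `h̃(x) = h(x) − ⟨∇h(x̄), x − x̄⟩` and `I = {i : x̄ᵢ ≠ 0}`,
`f` satisfies the KL property at `x̄` with exponent `α` iff there exist `c, r > 0`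
such that `‖(∇h̃(x))_I‖ ≥ c(h̃(x) − h̃(x̄))^α` for every `x` with `‖x − x̄‖ < r`,
`0 < h̃(x) − h̃(x̄) < r` and `xᵢ = x̄ᵢ` for all `i ∉ I`. -/
theorem stmt13 (n : ℕ) (hn : 0 < n)
    (h : EuclideanSpace ℝ (Fin n) → ℝ) (hh : ContDiff ℝ 2 h)
    (μ : ℝ) (hμ : 0 < μ)
    (f : EuclideanSpace ℝ (Fin n) → ℝ)
    (hf : f = fun x => h x + μ * ∑ i, |x i|)
    (xb : EuclideanSpace ℝ (Fin n))
    (hstat : ∀ i : Fin n,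
      (xb i ≠ 0 → gradient h xb i = -μ * Real.sign (xb i)) ∧
      (xb i = 0 → gradient h xb i ∈ Set.Ioo (-μ) μ))
    (htil : EuclideanSpace ℝ (Fin n) → ℝ)
    (hhtil : htil = fun x => h x - (inner ℝ (gradient h xb) (x - xb) : ℝ))
    (α : ℝ) (hα : α ∈ Set.Ioo (0 : ℝ) 1) :
    ((∃ c > (0 : ℝ), ∃ ε > (0 : ℝ), ∃ ν > (0 : ℝ), ∀ x : EuclideanSpace ℝ (Fin n),
        ‖x - xb‖ < ε → 0 < f x - f xb → f x - f xb < ν →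
        c * (f x - f xb) ^ α ≤
          Metric.infDist (0 : EuclideanSpace ℝ (Fin n))
            {v | ∃ ξ : EuclideanSpace ℝ (Fin n),
              (∀ i, (x i ≠ 0 → ξ i = Real.sign (x i)) ∧
                (x i = 0 → ξ i ∈ Set.Icc (-1 : ℝ) 1)) ∧
              v = gradient h x + μ • ξ}) ↔
     (∃ c > (0 : ℝ), ∃ r > (0 : ℝ), ∀ x : EuclideanSpace ℝ (Fin n),
        ‖x - xb‖ < r → 0 < htil x - htil xb → htil x - htil xb < r →
        (∀ i, xb i = 0 → x i = xb i) →
        c * (htil x - htil xb) ^ α ≤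
          Real.sqrt (∑ i ∈ Finset.univ.filter (fun i => xb i ≠ 0),
            (gradient htil x i) ^ 2))) :=
  stmt13_general n h hh μ f hf xb hstat htil hhtil α hα
end

section
/- Fix α ∈ [1/2, 1) and define h : ℝ → ℝ by h(x) = (1−α)|x|^{1/(1−α)} − x, and F : ℝ×ℝ → ℝ by F(a,b) = h(a² − b²) + a² + b² = (1−α)|a² − b²|^{1/(1−α)} + 2b². Then: (1) h is twice continuously differentiable and convex; (2) (0,0) is a global minimizer of F; (3) for every t > 0, F(t,0) − F(0,0) = (1−α)t^{2/(1−α)} and ‖∇F(t,0)‖ = 2·((1−α)^{−1}(F(t,0) − F(0,0)))^{(1+α)/2}; (4) consequently, for every θ ∈ (0, (1+α)/2), F does not satisfy the KL property at (0,0) with exponent θ, i.e., there are no c, ε, ν > 0 such that ‖∇F(a,b)‖ ≥ c·(F(a,b) − F(0,0))^θ for all (a,b) with ‖(a,b)‖ < ε and 0 < F(a,b) − F(0,0) < ν. -/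
/-!
With `p = 1/(1 - α) ≥ 2` we have `h(x) = |x|^p / p - x` and `F(a, b) = |a² - b²|^p / p + 2b²`,
so `F ≥ 0 = F(0, 0)`. `h` is `C²` because `x ↦ |x|^(p-2) x` is `C¹` with derivative
`(p - 1)|x|^(p-2)`. Along the axis `b = 0` the gap `F(t, 0) - F(0, 0) = t^(2p) / p` vanishes to
order `2p` while `∂ₐF(t, 0) = 2t^(2p-1)`, so `‖∇F(t, 0)‖ = 2 (p · gap)^((2p-1)/(2p))` and
`(2p-1)/(2p) = (1+α)/2`. A KL inequality `c · gap^θ ≤ ‖∇F‖` with `θ < (1+α)/2` would force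
`c ≤ K · gap^((1+α)/2 - θ) → 0` as `t → 0⁺`.
-/

open Filter Set Topology

lemma hasDerivAt_abs_rpow_mul_self {q : ℝ} (hq : 0 ≤ q) (x : ℝ) :
    HasDerivAt (fun y : ℝ => |y| ^ q * y) ((q + 1) * |x| ^ q) x := by
  rcases eq_or_ne x 0 with rfl | hx
  · rw [hasDerivAt_iff_tendsto_slope]
    have hslope : slope (fun y : ℝ => |y| ^ q * y) 0 =ᶠ[𝓝[≠] 0] fun y => |y| ^ q := by
      filter_upwards [self_mem_nhdsWithin] with y (hy : y ≠ 0)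
      simp [slope_def_field, hy]
    -- for `q = 0` both sides are `1`, since `0 ^ 0 = 1` for `rpow`
    have hlim : (q + 1) * |(0 : ℝ)| ^ q = |(0 : ℝ)| ^ q := by
      rcases eq_or_ne q 0 with rfl | hq₀ <;> simp [*]
    rw [tendsto_congr' hslope, hlim]
    exact ((Real.continuousAt_rpow_const _ q (Or.inr hq)).comp
      continuous_abs.continuousAt).tendsto.mono_left nhdsWithin_le_nhds
  · have habs : |x| ≠ 0 := abs_ne_zero.2 hx
    refine (((hasDerivAt_abs hx).rpow_const (p := q) (Or.inl habs)).mul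
      (hasDerivAt_id x)).congr_deriv ?_
    have hpow : |x| * |x| ^ (q - 1) = |x| ^ q := by
      rw [mul_comm, ← Real.rpow_add_one habs, sub_add_cancel]
    simp only [id_eq]
    linear_combination q * |x| ^ (q - 1) * sign_mul_self x + q * hpow

lemma convexOn_abs_rpow {p : ℝ} (hp : 1 ≤ p) : ConvexOn ℝ univ fun x : ℝ => |x| ^ p := by
  have hrange : (abs : ℝ → ℝ) '' univ = Ici 0 := by
    ext y
    exact ⟨by rintro ⟨x, -, rfl⟩; exact abs_nonneg x, fun hy => ⟨y, trivial, abs_of_nonneg hy⟩⟩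
  refine ConvexOn.comp (g := fun y : ℝ => y ^ p) ?_ convexOn_univ_norm ?_
  · rw [hrange]; exact convexOn_rpow hp
  · rw [hrange]; exact Real.monotoneOn_rpow_Ici_of_exponent_nonneg (by linarith)

lemma contDiff_one_abs_rpow_mul_self {q : ℝ} (hq : 0 ≤ q) :
    ContDiff ℝ 1 fun x : ℝ => |x| ^ q * x := by
  rw [contDiff_one_iff_deriv]
  refine ⟨fun x => (hasDerivAt_abs_rpow_mul_self hq x).differentiableAt, ?_⟩
  rw [funext fun x => (hasDerivAt_abs_rpow_mul_self hq x).deriv]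
  exact continuous_const.mul ((Real.continuous_rpow_const hq).comp continuous_abs)

lemma contDiff_two_abs_rpow {p : ℝ} (hp : 2 ≤ p) : ContDiff ℝ 2 fun x : ℝ => |x| ^ p := by
  rw [show (2 : WithTop ℕ∞) = 1 + 1 from rfl, contDiff_succ_iff_deriv]
  refine ⟨fun x => (hasDerivAt_abs_rpow x (by linarith)).differentiableAt, by simp, ?_⟩
  rw [funext fun x => (hasDerivAt_abs_rpow x (by linarith : 1 < p)).deriv]
  simp_rw [mul_assoc]
  exact contDiff_const.mul (contDiff_one_abs_rpow_mul_self (by linarith))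

/-- The Hadamard difference parametrization of `φ + |·|`. -/
def hadamardLift (φ : ℝ → ℝ) (q : ℝ × ℝ) : ℝ := φ (q.1 ^ 2 - q.2 ^ 2) + q.1 ^ 2 + q.2 ^ 2

lemma hasFDerivAt_hadamardLift {φ : ℝ → ℝ} {φ' a b : ℝ} (hφ : HasDerivAt φ φ' (a ^ 2 - b ^ 2)) :
    HasFDerivAt (hadamardLift φ)
      ((2 * a * (φ' + 1)) • ContinuousLinearMap.fst ℝ ℝ ℝ +
        (2 * b * (1 - φ')) • ContinuousLinearMap.snd ℝ ℝ ℝ) (a, b) := by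
  have ha := (hasDerivAt_pow 2 a).comp_hasFDerivAt (a, b) (hasFDerivAt_fst (𝕜 := ℝ))
  have hb := (hasDerivAt_pow 2 b).comp_hasFDerivAt (a, b) (hasFDerivAt_snd (𝕜 := ℝ))
  refine (((hφ.comp_hasFDerivAt (a, b) (ha.sub hb)).add ha).add hb).congr_fderiv ?_
  ext <;> simp <;> ring

lemma sqrt_partials_hadamardLift_axis {φ : ℝ → ℝ} {φ' t : ℝ} (hφ : HasDerivAt φ φ' (t ^ 2)) :
    √(fderiv ℝ (hadamardLift φ) (t, 0) (1, 0) ^ 2 + fderiv ℝ (hadamardLift φ) (t, 0) (0, 1) ^ 2) =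
      |2 * t * (φ' + 1)| := by
  rw [(hasFDerivAt_hadamardLift (by simpa using hφ)).fderiv]
  simp [Real.sqrt_sq_eq_abs]

/-- The function `h(x) = (1 - α)|x|^{1/(1 - α)} - x`, written with `p = 1/(1 - α)`. -/
noncomputable def absRpowSub (p x : ℝ) : ℝ := p⁻¹ * |x| ^ p - x

lemma hasDerivAt_absRpowSub {p : ℝ} (hp : 1 < p) (x : ℝ) :
    HasDerivAt (absRpowSub p) (|x| ^ (p - 2) * x - 1) x := by
  refine (((hasDerivAt_abs_rpow x hp).const_mul p⁻¹).sub (hasDerivAt_id x)).congr_deriv ?_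
  field_simp

lemma contDiff_two_absRpowSub {p : ℝ} (hp : 2 ≤ p) : ContDiff ℝ 2 (absRpowSub p) :=
  (contDiff_const.mul (contDiff_two_abs_rpow hp)).sub contDiff_id

lemma convexOn_absRpowSub {p : ℝ} (hp : 1 ≤ p) : ConvexOn ℝ univ (absRpowSub p) :=
  ((convexOn_abs_rpow hp).smul (inv_nonneg.2 (by linarith))).sub (concaveOn_id convex_univ)

lemma hadamardLift_absRpowSub (p : ℝ) (q : ℝ × ℝ) :
    hadamardLift (absRpowSub p) q = p⁻¹ * |q.1 ^ 2 - q.2 ^ 2| ^ p + 2 * q.2 ^ 2 := by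
  rw [hadamardLift, absRpowSub]
  ring

lemma hadamardLift_absRpowSub_origin_le {p : ℝ} (hp : 0 < p) (q : ℝ × ℝ) :
    hadamardLift (absRpowSub p) (0, 0) ≤ hadamardLift (absRpowSub p) q := by
  rw [hadamardLift_absRpowSub, hadamardLift_absRpowSub]
  norm_num [Real.zero_rpow hp.ne']
  positivity

lemma hadamardLift_absRpowSub_axis_sub_origin {p t : ℝ} (hp : 0 < p) (ht : 0 ≤ t) :
    hadamardLift (absRpowSub p) (t, 0) - hadamardLift (absRpowSub p) (0, 0) =
      p⁻¹ * t ^ (2 * p) := by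
  simp [hadamardLift_absRpowSub, Real.zero_rpow hp.ne', Real.rpow_mul ht]

lemma sqrt_partials_hadamardLift_absRpowSub_axis {p t : ℝ} (hp : 1 < p) (ht : 0 < t) :
    √(fderiv ℝ (hadamardLift (absRpowSub p)) (t, 0) (1, 0) ^ 2 +
      fderiv ℝ (hadamardLift (absRpowSub p)) (t, 0) (0, 1) ^ 2) = 2 * t ^ (2 * p - 1) := by
  rw [sqrt_partials_hadamardLift_axis (hasDerivAt_absRpowSub hp _), sub_add_cancel,
    abs_of_pos (by positivity), abs_of_pos (by positivity), ← Real.rpow_natCast,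
    ← Real.rpow_mul ht.le, ← Real.rpow_add ht, mul_assoc, mul_comm t, ← Real.rpow_add_one ht.ne']
  congr 2
  push_cast
  ring

lemma tendsto_const_mul_rpow_nhdsGT_zero {a r : ℝ} (ha : 0 < a) (hr : 0 < r) :
    Tendsto (fun t : ℝ => a * t ^ r) (𝓝[>] 0) (𝓝[>] 0) := by
  refine tendsto_nhdsWithin_iff.2
    ⟨?_, eventually_mem_nhdsWithin.mono fun t ht => mul_pos ha (Real.rpow_pos_of_pos ht r)⟩
  simpa [Real.zero_rpow hr.ne'] using
    ((Real.continuousAt_rpow_const 0 r (Or.inr hr.le)).tendsto.const_mul a).mono_left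
      nhdsWithin_le_nhds

lemma eventually_mul_rpow_lt_mul_rpow {θ θ₀ c : ℝ} (hθ : θ < θ₀) (hc : 0 < c) (K : ℝ) :
    ∀ᶠ s in 𝓝[>] (0 : ℝ), K * s ^ θ₀ < c * s ^ θ := by
  have hlim : Tendsto (fun s : ℝ => K * s ^ (θ₀ - θ)) (𝓝[>] 0) (𝓝 0) := by
    simpa using ((tendsto_const_mul_rpow_nhdsGT_zero one_pos (sub_pos.2 hθ)).mono_right
      nhdsWithin_le_nhds).const_mul K
  filter_upwards [hlim.eventually (gt_mem_nhds hc), eventually_mem_nhdsWithin]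
    with s hs (hs₀ : 0 < s)
  calc K * s ^ θ₀ = K * s ^ (θ₀ - θ) * s ^ θ := by
        rw [mul_assoc, ← Real.rpow_add hs₀, sub_add_cancel]
    _ < c * s ^ θ := mul_lt_mul_of_pos_right hs (Real.rpow_pos_of_pos hs₀ θ)

lemma not_KL_inequality_of_axis {F : ℝ × ℝ → ℝ} {a r K θ θ₀ : ℝ} (ha : 0 < a) (hr : 0 < r)
    (hθ : θ < θ₀) (hgap : ∀ t > 0, F (t, 0) - F (0, 0) = a * t ^ r)
    (hgrad : ∀ t > 0, √(fderiv ℝ F (t, 0) (1, 0) ^ 2 + fderiv ℝ F (t, 0) (0, 1) ^ 2) =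
      K * (F (t, 0) - F (0, 0)) ^ θ₀) :
    ¬ ∃ c > (0 : ℝ), ∃ ε > (0 : ℝ), ∃ ν > (0 : ℝ), ∀ q : ℝ × ℝ,
      √(q.1 ^ 2 + q.2 ^ 2) < ε → 0 < F q - F (0, 0) → F q - F (0, 0) < ν →
        c * (F q - F (0, 0)) ^ θ ≤ √(fderiv ℝ F q (1, 0) ^ 2 + fderiv ℝ F q (0, 1) ^ 2) := by
  rintro ⟨c, hc, ε, hε, ν, hν, hKL⟩
  have hsmall : ∀ᶠ s in 𝓝[>] (0 : ℝ), 0 < s ∧ s < ν ∧ K * s ^ θ₀ < c * s ^ θ :=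
    eventually_mem_nhdsWithin.and (((eventually_lt_nhds hν).filter_mono nhdsWithin_le_nhds).and
      (eventually_mul_rpow_lt_mul_rpow hθ hc K))
  have hgap_lim : Tendsto (fun t => F (t, 0) - F (0, 0)) (𝓝[>] 0) (𝓝[>] 0) :=
    (tendsto_const_mul_rpow_nhdsGT_zero ha hr).congr'
      (eventually_mem_nhdsWithin.mono fun t ht => (hgap t ht).symm)
  obtain ⟨t, ⟨hs₀, hsν, hlt⟩, ht₀, htε⟩ :=
    ((hgap_lim.eventually hsmall).and (Ioo_mem_nhdsGT hε)).exists
  have hle := hKL (t, 0) (by simpa [Real.sqrt_sq ht₀.le] using htε) hs₀ hsν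
  rw [hgrad t ht₀] at hle
  linarith

/-- **Example 3.9.** With `h(x) = (1−α)|x|^{1/(1−α)} − x` and
`F(a,b) = h(a² − b²) + a² + b² = (1−α)|a² − b²|^{1/(1−α)} + 2b²` for `α ∈ [1/2, 1)`:
(1) `h` is `C²` and convex; (2) `(0,0)` globally minimizes `F`;
(3) for `t > 0`, `F(t,0) − F(0,0) = (1−α)t^{2/(1−α)}` and
`‖∇F(t,0)‖ = 2((1−α)⁻¹(F(t,0) − F(0,0)))^{(1+α)/2}`; (4) hence `F` does not satisfy
the KL property at `(0,0)` with any exponent `θ ∈ (0, (1+α)/2)`. -/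
theorem stmt15 (α : ℝ) (hα : α ∈ Set.Ico (1 / 2 : ℝ) 1)
    (h : ℝ → ℝ) (hh : h = fun x => (1 - α) * |x| ^ (1 / (1 - α)) - x)
    (F : ℝ × ℝ → ℝ) (hF : F = fun p => h (p.1 ^ 2 - p.2 ^ 2) + p.1 ^ 2 + p.2 ^ 2) :
    (∀ p : ℝ × ℝ, F p = (1 - α) * |p.1 ^ 2 - p.2 ^ 2| ^ (1 / (1 - α)) + 2 * p.2 ^ 2) ∧
    (ContDiff ℝ 2 h ∧ ConvexOn ℝ Set.univ h) ∧
    (∀ p : ℝ × ℝ, F (0, 0) ≤ F p) ∧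
    (∀ t : ℝ, 0 < t →
      F (t, 0) - F (0, 0) = (1 - α) * t ^ (2 / (1 - α)) ∧
      Real.sqrt ((fderiv ℝ F (t, 0) (1, 0)) ^ 2 + (fderiv ℝ F (t, 0) (0, 1)) ^ 2) =
        2 * ((1 - α)⁻¹ * (F (t, 0) - F (0, 0))) ^ ((1 + α) / 2)) ∧
    (∀ θ : ℝ, 0 < θ → θ < (1 + α) / 2 →
      ¬ ∃ c > (0 : ℝ), ∃ ε > (0 : ℝ), ∃ ν > (0 : ℝ), ∀ p : ℝ × ℝ,
        Real.sqrt (p.1 ^ 2 + p.2 ^ 2) < ε →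
        0 < F p - F (0, 0) → F p - F (0, 0) < ν →
        c * (F p - F (0, 0)) ^ θ ≤
          Real.sqrt ((fderiv ℝ F p (1, 0)) ^ 2 + (fderiv ℝ F p (0, 1)) ^ 2)) := by
  obtain ⟨p, hp, rfl⟩ : ∃ p : ℝ, 2 ≤ p ∧ α = 1 - p⁻¹ := by
    refine ⟨(1 - α)⁻¹, ?_, by rw [inv_inv]; ring⟩
    rw [le_inv_comm₀ two_pos (by linarith [hα.2])]
    linarith [hα.1]
  have hp₀ : 0 < p := by linarith
  simp only [sub_sub_cancel, div_inv_eq_mul, one_mul, inv_inv] at hh ⊢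
  obtain rfl : h = absRpowSub p := hh
  obtain rfl : F = hadamardLift (absRpowSub p) := hF
  set F := hadamardLift (absRpowSub p)
  have hgap (t : ℝ) (ht : 0 < t) := hadamardLift_absRpowSub_axis_sub_origin hp₀ ht.le
  have hgrad (t : ℝ) (ht : 0 < t) :
      √(fderiv ℝ F (t, 0) (1, 0) ^ 2 + fderiv ℝ F (t, 0) (0, 1) ^ 2) =
        2 * (p * (F (t, 0) - F (0, 0))) ^ ((1 + (1 - p⁻¹)) / 2) := by
    rw [hgap t ht, mul_inv_cancel_left₀ hp₀.ne', ← Real.rpow_mul (by positivity),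
      sqrt_partials_hadamardLift_absRpowSub_axis (by linarith) ht]
    congr 2
    field_simp
    ring
  refine ⟨hadamardLift_absRpowSub p, ⟨contDiff_two_absRpowSub hp, convexOn_absRpowSub (by linarith)⟩,
    hadamardLift_absRpowSub_origin_le hp₀, fun t ht => ⟨hgap t ht, hgrad t ht⟩, fun θ _ hθ => ?_⟩
  refine not_KL_inequality_of_axis (K := 2 * p ^ ((1 + (1 - p⁻¹)) / 2)) (inv_pos.2 hp₀)
    (by positivity) hθ hgap fun t ht => ?_
  rw [hgrad t ht, Real.mul_rpow hp₀.le (hgap t ht ▸ by positivity), mul_assoc]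
end

section
/- Fix γ ∈ (0, 1/2] and α ∈ (1/2, 1), and let Ω = {x ∈ ℝ² : x₁ ≥ 0, x₂ ≥ 0, x₂ ≥ x₁^{1/γ}} and σ = √(γ^{−2} + 1)/(1−α). Then for every x ∈ ℝ² with x₁ ≥ 0, x₂ ≥ 0 and x₁ ≤ 1, it holds that max{x₁^{1/γ} − x₂, 0} ≤ σ·dist(x, Ω). -/
/-!
For `y ∈ Ω` the residual `g(z) = z₀^{1/γ} − z₁` is `≤ 0`, so `g(x) ≤ g(x) − g(y)`. Since `x₀ ≤ 1`,
the mean value theorem bounds `x₀^p − y₀^p` by `p |x₀ − y₀|` (when `y₀ > x₀` the difference is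
negative anyway), and Cauchy–Schwarz turns `p |x₀ − y₀| + |x₁ − y₁|` into `√(p² + 1) · ‖x − y‖`.
Taking the infimum over `y` and using `1 − α ≤ 1` gives the bound with `σ`.
-/

open Metric

lemma rpow_sub_rpow_le_mul_sub {p a b : ℝ} (hp : 1 ≤ p) (ha : 0 ≤ a) (hab : a ≤ b) (hb : b ≤ 1) :
    b ^ p - a ^ p ≤ p * (b - a) := by
  have hderiv : ∀ t ∈ Set.Icc (0 : ℝ) 1,
      HasDerivWithinAt (fun s : ℝ => s ^ p) (p * t ^ (p - 1)) (Set.Icc 0 1) t :=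
    fun t _ => (Real.hasDerivAt_rpow_const (Or.inr hp)).hasDerivWithinAt
  have hbound : ∀ t ∈ Set.Icc (0 : ℝ) 1, ‖p * t ^ (p - 1)‖ ≤ p := by
    intro t ht
    have h1 : t ^ (p - 1) ≤ 1 := Real.rpow_le_one ht.1 ht.2 (by linarith)
    have h0 : 0 ≤ t ^ (p - 1) := Real.rpow_nonneg ht.1 _
    rw [Real.norm_eq_abs, abs_of_nonneg (by positivity)]
    nlinarith
  calc b ^ p - a ^ p ≤ ‖b ^ p - a ^ p‖ := le_abs_self _
    _ ≤ p * ‖b - a‖ := (convex_Icc 0 1).norm_image_sub_le_of_norm_hasDerivWithin_le hderiv hbound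
        ⟨ha, hab.trans hb⟩ ⟨ha.trans hab, hb⟩
    _ = p * (b - a) := by rw [Real.norm_eq_abs, abs_of_nonneg (by linarith)]

lemma rpow_sub_rpow_le_mul_dist {p a b : ℝ} (hp : 1 ≤ p) (ha : 0 ≤ a) (hb : 0 ≤ b) (hb1 : b ≤ 1) :
    b ^ p - a ^ p ≤ p * dist b a := by
  rcases le_total a b with hab | hba
  · calc b ^ p - a ^ p ≤ p * (b - a) := rpow_sub_rpow_le_mul_sub hp ha hab hb1
      _ ≤ p * dist b a := by gcongr; exact le_abs_self _
  · have : b ^ p ≤ a ^ p := Real.rpow_le_rpow hb hba (by linarith)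
    have : 0 ≤ p * dist b a := mul_nonneg (by linarith) dist_nonneg
    linarith

lemma mul_add_mul_le_sqrt_mul_sqrt (a b u v : ℝ) :
    a * u + b * v ≤ √(a ^ 2 + b ^ 2) * √(u ^ 2 + v ^ 2) := by
  rw [← Real.sqrt_mul (by positivity)]
  exact Real.le_sqrt_of_sq_le (by nlinarith [sq_nonneg (a * v - b * u)])

lemma le_mul_infDist_of_forall_le_mul_dist {X : Type*} [PseudoMetricSpace X] {s : Set X}
    {x : X} {r c : ℝ} (hs : s.Nonempty) (hc : 0 < c) (h : ∀ y ∈ s, r ≤ c * dist x y) :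
    r ≤ c * infDist x s := by
  rw [← div_le_iff₀' hc, le_infDist hs]
  intro y hy
  rw [div_le_iff₀' hc]
  exact h y hy

lemma rpow_sub_le_sqrt_mul_dist {p : ℝ} (hp : 1 ≤ p) {x y : EuclideanSpace ℝ (Fin 2)}
    (hx0 : 0 ≤ x 0) (hx01 : x 0 ≤ 1) (hy0 : 0 ≤ y 0) (hy : y 0 ^ p ≤ y 1) :
    x 0 ^ p - x 1 ≤ √(p ^ 2 + 1) * dist x y := by
  have hdist : dist x y = √(dist (x 0) (y 0) ^ 2 + dist (x 1) (y 1) ^ 2) := by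
    rw [EuclideanSpace.dist_eq, Fin.sum_univ_two]
  have h0 : x 0 ^ p - y 0 ^ p ≤ p * dist (x 0) (y 0) := rpow_sub_rpow_le_mul_dist hp hy0 hx0 hx01
  have h1 : y 1 - x 1 ≤ 1 * dist (x 1) (y 1) := by
    rw [one_mul, dist_comm]; exact le_abs_self _
  calc x 0 ^ p - x 1 ≤ p * dist (x 0) (y 0) + 1 * dist (x 1) (y 1) := by linarith
    _ ≤ √(p ^ 2 + 1 ^ 2) * √(dist (x 0) (y 0) ^ 2 + dist (x 1) (y 1) ^ 2) :=
        mul_add_mul_le_sqrt_mul_sqrt _ _ _ _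
    _ = √(p ^ 2 + 1) * dist x y := by rw [one_pow, hdist]

/-- For `γ ∈ (0, 1/2]`, `α ∈ (1/2, 1)`,
`Ω = {x ∈ ℝ² : x₁ ≥ 0, x₂ ≥ 0, x₂ ≥ x₁^{1/γ}}` and `σ = √(γ⁻² + 1)/(1−α)`:
for every `x` with `x₁, x₂ ≥ 0` and `x₁ ≤ 1`,
`max{x₁^{1/γ} − x₂, 0} ≤ σ · dist(x, Ω)`. -/
theorem stmt18 (γ α : ℝ) (hγ : γ ∈ Set.Ioc (0 : ℝ) (1 / 2))
    (hα : α ∈ Set.Ioo (1 / 2 : ℝ) 1)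
    (Ω : Set (EuclideanSpace ℝ (Fin 2)))
    (hΩ : Ω = {x | 0 ≤ x 0 ∧ 0 ≤ x 1 ∧ (x 0) ^ (1 / γ) ≤ x 1})
    (σ : ℝ) (hσ : σ = Real.sqrt (γ⁻¹ ^ 2 + 1) / (1 - α)) :
    ∀ x : EuclideanSpace ℝ (Fin 2), 0 ≤ x 0 → 0 ≤ x 1 → x 0 ≤ 1 →
      max ((x 0) ^ (1 / γ) - x 1) 0 ≤ σ * Metric.infDist x Ω := by
  intro x hx0 _ hx01
  have hp : 1 ≤ 1 / γ := by rw [le_div_iff₀ hγ.1]; linarith [hγ.2]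
  have hc : 0 < √(γ⁻¹ ^ 2 + 1) := by positivity
  have hΩne : Ω.Nonempty := ⟨WithLp.toLp 2 fun _ => 1, by simp [hΩ]⟩
  have hresidual : x 0 ^ (1 / γ) - x 1 ≤ √(γ⁻¹ ^ 2 + 1) * infDist x Ω := by
    refine le_mul_infDist_of_forall_le_mul_dist hΩne hc fun y hy => ?_
    rw [hΩ] at hy
    simpa only [one_div] using rpow_sub_le_sqrt_mul_dist hp hx0 hx01 hy.1 hy.2.2
  have hcσ : √(γ⁻¹ ^ 2 + 1) ≤ σ := by
    rw [hσ]; exact le_div_self hc.le (by linarith [hα.2]) (by linarith [hα.1])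
  exact max_le (hresidual.trans (by gcongr; exact infDist_nonneg))
    (mul_nonneg (hc.le.trans hcσ) infDist_nonneg)
end

section
/- Fix γ ∈ (0, 1/2] and α ∈ (1/2, 1), set β = 1 − γ(1−α), and define F : ℝ²×ℝ² → ℝ by F(a,b) = (1−α)·max{|a₁² − b₁²|^{1/γ} − a₂² + b₂², 0}^{1/(1−α)} + 2b₁² + 2b₂². Then: (1) (0,0) is a global minimizer of F; (2) for every t > 0, F((t,0),(0,0)) − F(0,0) = (1−α)t^{2/(γ(1−α))} and ∇F((t,0),(0,0)) = ((2/γ)t^{2/(γ(1−α))−1}, 0, 0, 0), so that ‖∇F((t,0),(0,0))‖ = (2/γ)·((1−α)^{−1}(F((t,0),(0,0)) − F(0,0)))^{(1+β)/2}; (3) consequently, for every θ ∈ (0, (1+β)/2), F does not satisfy the KL property at (0,0) with exponent θ, i.e., there are no c, ε, ν > 0 such that ‖∇F(a,b)‖ ≥ c·(F(a,b) − F(0,0))^θ for all (a,b) with ‖(a,b)‖ < ε and 0 < F(a,b) − F(0,0) < ν. -/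
/-!
Along the axis curve `t ↦ ((t, 0), (0, 0))` the `max` is active and `F` is smooth, with
`F - F(0,0) = (1-α) t^q` for `q = 2 / (γ(1-α))` and gradient `(2/γ) t^(q-1) e₁`.
Since `q - 1 = q(1+β)/2`, the ratio `‖∇F‖ / (F - F(0,0))^θ` behaves like `t^(q-1-qθ)`,
which tends to `0` as `t → 0⁺` whenever `θ < (1+β)/2`, so no KL inequality with such `θ` holds.
-/

open Filter Topology

local notation "ℝ²" => EuclideanSpace ℝ (Fin 2)

/-- `h(a² - b²) + ‖a‖² + ‖b‖²` written out: the linear part `-x₁ - x₂` of `h` cancels `‖a‖²`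
and doubles `‖b‖²`. -/
noncomputable def hadamardF (γ α : ℝ) (p : ℝ² × ℝ²) : ℝ :=
  (1 - α) * (max (|p.1 0 ^ 2 - p.2 0 ^ 2| ^ (1 / γ) - p.1 1 ^ 2 + p.2 1 ^ 2) 0) ^ (1 / (1 - α))
    + 2 * (p.2 0) ^ 2 + 2 * (p.2 1) ^ 2

lemma hadamardF_nonneg {γ α : ℝ} (hα : α ≤ 1) (p : ℝ² × ℝ²) : 0 ≤ hadamardF γ α p := by
  have : 0 ≤ 1 - α := by linarith
  unfold hadamardF
  positivity

lemma hadamardF_origin {γ α : ℝ} (hγ : γ ≠ 0) (hα : α ≠ 1) : hadamardF γ α (0, 0) = 0 := by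
  have : 1 - α ≠ 0 := sub_ne_zero.mpr hα.symm
  simp [hadamardF, Real.zero_rpow, hγ, this]

lemma hadamardF_axis (γ α : ℝ) {t : ℝ} (ht : 0 ≤ t) :
    hadamardF γ α (WithLp.toLp 2 ![t, 0], 0) = (1 - α) * t ^ (2 / (γ * (1 - α))) := by
  have ht2 : (0 : ℝ) ≤ t ^ 2 := by positivity
  simp only [hadamardF, Matrix.cons_val_zero, Matrix.cons_val_one, Matrix.cons_val_fin_one,
    PiLp.zero_apply, ne_eq, OfNat.ofNat_ne_zero, not_false_eq_true, zero_pow, sub_zero, add_zero,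
    mul_zero, abs_of_nonneg ht2, max_eq_left (Real.rpow_nonneg ht2 _)]
  rw [← Real.rpow_natCast t 2, ← Real.rpow_mul ht, ← Real.rpow_mul ht, div_eq_mul_inv 2, mul_inv]
  congr 2
  push_cast
  ring

lemma axis_chain_rule_coeff_eq (γ : ℝ) {α t : ℝ} (hα : α ≠ 1) (ht : 0 < t) :
    (1 - α) * (1 / (1 - α) * ((t ^ 2) ^ (1 / γ)) ^ (1 / (1 - α) - 1)) *
        (1 / γ * (t ^ 2) ^ (1 / γ - 1) * (2 * t))
      = 2 / γ * t ^ (2 / (γ * (1 - α)) - 1) := by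
  have h1α : 1 - α ≠ 0 := sub_ne_zero.mpr hα.symm
  have hsplit : 2 / (γ * (1 - α)) - 1 =
      ((2 : ℕ) : ℝ) * (1 / γ) * (1 / (1 - α) - 1) + (((2 : ℕ) : ℝ) * (1 / γ - 1) + 1) := by
    rw [div_eq_mul_inv 2, mul_inv]
    push_cast
    ring
  rw [← Real.rpow_natCast t 2, ← Real.rpow_mul ht.le, ← Real.rpow_mul ht.le,
    ← Real.rpow_mul ht.le, hsplit, Real.rpow_add ht, Real.rpow_add ht, Real.rpow_one]
  linear_combination (2 / γ * t ^ (((2 : ℕ) : ℝ) * (1 / γ) * (1 / (1 - α) - 1)) *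
    t ^ (((2 : ℕ) : ℝ) * (1 / γ - 1)) * t) * mul_one_div_cancel h1α

lemma hasFDerivAt_hadamardF_axis (γ : ℝ) {α t : ℝ} (hα : α ≠ 1) (ht : 0 < t) :
    HasFDerivAt (hadamardF γ α)
      ((2 / γ * t ^ (2 / (γ * (1 - α)) - 1)) •
        (EuclideanSpace.proj 0).comp (ContinuousLinearMap.fst ℝ ℝ² ℝ²))
      (WithLp.toLp 2 ![t, 0], 0) := by
  set x₀ : ℝ² × ℝ² := (WithLp.toLp 2 ![t, 0], 0)
  let a₀ := (EuclideanSpace.proj (0 : Fin 2)).comp (ContinuousLinearMap.fst ℝ ℝ² ℝ²)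
  let a₁ := (EuclideanSpace.proj (1 : Fin 2)).comp (ContinuousLinearMap.fst ℝ ℝ² ℝ²)
  let b₀ := (EuclideanSpace.proj (0 : Fin 2)).comp (ContinuousLinearMap.snd ℝ ℝ² ℝ²)
  let b₁ := (EuclideanSpace.proj (1 : Fin 2)).comp (ContinuousLinearMap.snd ℝ ℝ² ℝ²)
  have ha₀ : a₀ x₀ = t := rfl
  have ha₁ : a₁ x₀ = 0 := rfl
  have hb₀ : b₀ x₀ = 0 := rfl
  have hb₁ : b₁ x₀ = 0 := rfl
  let u : ℝ² × ℝ² → ℝ := fun p => a₀ p ^ 2 - b₀ p ^ 2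
  let g : ℝ² × ℝ² → ℝ := fun p => u p ^ (1 / γ) - a₁ p ^ 2 + b₁ p ^ 2
  have hu : u x₀ = t ^ 2 := by simp [u, ha₀, hb₀]
  have hg : g x₀ = (t ^ 2) ^ (1 / γ) := by simp [g, hu, ha₁, hb₁]
  have hu_pos : 0 < u x₀ := hu ▸ by positivity
  have hg_pos : 0 < g x₀ := hg ▸ by positivity
  have hdu := (a₀.hasFDerivAt.pow 2).fun_sub (b₀.hasFDerivAt.pow 2) (x := x₀)
  have hdg := ((hdu.rpow_const (p := 1 / γ) (Or.inl hu_pos.ne')).fun_sub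
    (a₁.hasFDerivAt.pow 2)).fun_add (b₁.hasFDerivAt.pow 2)
  have hdF := (((hdg.rpow_const (p := 1 / (1 - α)) (Or.inl hg_pos.ne')).const_mul (1 - α)).fun_add
    ((b₀.hasFDerivAt.pow 2).const_mul 2)).fun_add ((b₁.hasFDerivAt.pow 2).const_mul 2)
  have hlocal : hadamardF γ α =ᶠ[𝓝 x₀]
      fun p => (1 - α) * g p ^ (1 / (1 - α)) + 2 * b₀ p ^ 2 + 2 * b₁ p ^ 2 := by
    filter_upwards [hdu.continuousAt.eventually (eventually_gt_nhds hu_pos),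
      hdg.continuousAt.eventually (eventually_gt_nhds hg_pos)] with p hup hgp
    change (1 - α) * max (|u p| ^ (1 / γ) - a₁ p ^ 2 + b₁ p ^ 2) 0 ^ (1 / (1 - α))
      + 2 * b₀ p ^ 2 + 2 * b₁ p ^ 2 = _
    rw [abs_of_pos hup, max_eq_left hgp.le]
  refine (hdF.congr_of_eventuallyEq hlocal).congr_fderiv (ContinuousLinearMap.ext fun p => ?_)
  rw [← axis_chain_rule_coeff_eq γ hα ht]
  simp only [ha₀, ha₁, hb₀, hb₁, add_apply, sub_apply, smul_apply, smul_eq_mul, nsmul_eq_mul]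
  change _ = _ * a₀ p
  simp only [ne_eq, OfNat.ofNat_ne_zero, not_false_eq_true, zero_pow, sub_zero, add_zero]
  ring

lemma sqrt_sum_sq_smul_proj_fst (c : ℝ) :
    √(∑ i, ((c • (EuclideanSpace.proj 0).comp (ContinuousLinearMap.fst ℝ ℝ² ℝ²))
          (EuclideanSpace.single i 1, 0)) ^ 2 +
      ∑ i, ((c • (EuclideanSpace.proj 0).comp (ContinuousLinearMap.fst ℝ ℝ² ℝ²))
          ((0 : ℝ²), EuclideanSpace.single i 1)) ^ 2) = |c| := by
  simp [Real.sqrt_sq_eq_abs]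

lemma hadamardF_axis_sub_origin {γ α t : ℝ} (hγ : γ ≠ 0) (hα : α ≠ 1) (ht : 0 ≤ t) :
    hadamardF γ α (WithLp.toLp 2 ![t, 0], 0) - hadamardF γ α (0, 0) =
      (1 - α) * t ^ (2 / (γ * (1 - α))) := by
  rw [hadamardF_axis γ α ht, hadamardF_origin hγ hα, sub_zero]

lemma sqrt_sum_sq_fderiv_hadamardF_axis {γ α t : ℝ} (hγ : 0 < γ) (hα : α ≠ 1) (ht : 0 < t) :
    √(∑ i, (fderiv ℝ (hadamardF γ α) (WithLp.toLp 2 ![t, 0], 0)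
        (EuclideanSpace.single i 1, 0)) ^ 2 +
      ∑ i, (fderiv ℝ (hadamardF γ α) (WithLp.toLp 2 ![t, 0], 0)
        ((0 : ℝ²), EuclideanSpace.single i 1)) ^ 2) = 2 / γ * t ^ (2 / (γ * (1 - α)) - 1) := by
  rw [(hasFDerivAt_hadamardF_axis γ hα ht).fderiv, sqrt_sum_sq_smul_proj_fst,
    abs_of_pos (by positivity)]

lemma two_div_mul_one_add_one_sub_div_two {γ α : ℝ} (hγ : γ ≠ 0) (hα : α ≠ 1) :
    2 / (γ * (1 - α)) * ((1 + (1 - γ * (1 - α))) / 2) = 2 / (γ * (1 - α)) - 1 := by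
  have := sub_ne_zero.mpr hα.symm
  field_simp
  ring

lemma tendsto_const_mul_rpow_nhds_zero (C : ℝ) {r : ℝ} (hr : 0 < r) :
    Tendsto (fun t : ℝ => C * t ^ r) (𝓝 0) (𝓝 0) := by
  simpa [Real.zero_rpow hr.ne'] using ((Real.continuous_rpow_const hr.le).tendsto 0).const_mul C

lemma exists_pos_mul_rpow_sub_one_lt {A B c q θ ε ν : ℝ} (hA : 0 < A) (hc : 0 < c) (hq : 0 < q)
    (hθ : q * θ < q - 1) (hε : 0 < ε) (hν : 0 < ν) :
    ∃ t, 0 < t ∧ t < ε ∧ A * t ^ q < ν ∧ B * t ^ (q - 1) < c * (A * t ^ q) ^ θ := by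
  have hdecay : ∀ᶠ t in 𝓝[>] 0, B * t ^ (q - 1 - q * θ) < c * A ^ θ :=
    ((tendsto_const_mul_rpow_nhds_zero B (sub_pos.mpr hθ)).eventually
      (eventually_lt_nhds (by positivity))).filter_mono nhdsWithin_le_nhds
  have hsmall : ∀ᶠ t in 𝓝[>] 0, A * t ^ q < ν ∧ t < ε :=
    (((tendsto_const_mul_rpow_nhds_zero A hq).eventually (eventually_lt_nhds hν)).and
      (eventually_lt_nhds hε)).filter_mono nhdsWithin_le_nhds
  obtain ⟨t, hdecay, ⟨htν, htε⟩, ht⟩ := (hdecay.and (hsmall.and self_mem_nhdsWithin)).exists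
  refine ⟨t, ht, htε, htν, ?_⟩
  calc B * t ^ (q - 1) = B * t ^ (q - 1 - q * θ) * t ^ (q * θ) := by
        rw [mul_assoc, ← Real.rpow_add ht, sub_add_cancel]
    _ < c * A ^ θ * t ^ (q * θ) := by gcongr
    _ = c * (A * t ^ q) ^ θ := by
        rw [Real.mul_rpow hA.le (Real.rpow_nonneg ht.le _), ← Real.rpow_mul ht.le, mul_assoc]

/-- **Example 3.15.** For `γ ∈ (0,1/2]`, `α ∈ (1/2,1)`,
`β = 1 − γ(1−α)` and
`F(a,b) = (1−α)max{|a₁²−b₁²|^{1/γ} − a₂² + b₂², 0}^{1/(1−α)} + 2b₁² + 2b₂²`: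
(1) `(0,0)` globally minimizes `F`;
(2) for `t > 0`, `F((t,0),(0,0)) − F(0,0) = (1−α)t^{2/(γ(1−α))}`,
`∇F((t,0),(0,0)) = ((2/γ)t^{2/(γ(1−α))−1}, 0, 0, 0)`, and
`‖∇F((t,0),(0,0))‖ = (2/γ)((1−α)⁻¹(F((t,0),(0,0)) − F(0,0)))^{(1+β)/2}`;
(3) hence `F` does not satisfy the KL property at `(0,0)` with any exponent
`θ ∈ (0, (1+β)/2)`. -/
theorem stmt19 (γ α : ℝ) (hγ : γ ∈ Set.Ioc (0 : ℝ) (1 / 2))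
    (hα : α ∈ Set.Ioo (1 / 2 : ℝ) 1)
    (β : ℝ) (hβ : β = 1 - γ * (1 - α))
    (F : EuclideanSpace ℝ (Fin 2) × EuclideanSpace ℝ (Fin 2) → ℝ)
    (hF : F = fun p =>
      (1 - α) * (max (|p.1 0 ^ 2 - p.2 0 ^ 2| ^ (1 / γ) - p.1 1 ^ 2 + p.2 1 ^ 2) 0)
          ^ (1 / (1 - α))
        + 2 * (p.2 0) ^ 2 + 2 * (p.2 1) ^ 2) :
    (∀ p, F (0, 0) ≤ F p) ∧
    (∀ t : ℝ, 0 < t →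
      F ((WithLp.toLp 2 ![t, 0] : EuclideanSpace ℝ (Fin 2)), 0) - F (0, 0) =
        (1 - α) * t ^ (2 / (γ * (1 - α))) ∧
      fderiv ℝ F ((WithLp.toLp 2 ![t, 0] : EuclideanSpace ℝ (Fin 2)), 0)
          (EuclideanSpace.single 0 1, 0) = (2 / γ) * t ^ (2 / (γ * (1 - α)) - 1) ∧
      fderiv ℝ F ((WithLp.toLp 2 ![t, 0] : EuclideanSpace ℝ (Fin 2)), 0)
          (EuclideanSpace.single 1 1, 0) = 0 ∧
      fderiv ℝ F ((WithLp.toLp 2 ![t, 0] : EuclideanSpace ℝ (Fin 2)), 0)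
          (0, EuclideanSpace.single 0 1) = 0 ∧
      fderiv ℝ F ((WithLp.toLp 2 ![t, 0] : EuclideanSpace ℝ (Fin 2)), 0)
          (0, EuclideanSpace.single 1 1) = 0 ∧
      Real.sqrt
          (∑ i, (fderiv ℝ F ((WithLp.toLp 2 ![t, 0] : EuclideanSpace ℝ (Fin 2)), 0)
              (EuclideanSpace.single i 1, 0)) ^ 2 +
           ∑ i, (fderiv ℝ F ((WithLp.toLp 2 ![t, 0] : EuclideanSpace ℝ (Fin 2)), 0)
              ((0 : EuclideanSpace ℝ (Fin 2)), EuclideanSpace.single i 1)) ^ 2) =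
        (2 / γ) * ((1 - α)⁻¹ *
          (F ((WithLp.toLp 2 ![t, 0] : EuclideanSpace ℝ (Fin 2)), 0) - F (0, 0))) ^ ((1 + β) / 2)) ∧
    (∀ θ : ℝ, 0 < θ → θ < (1 + β) / 2 →
      ¬ ∃ c > (0 : ℝ), ∃ ε > (0 : ℝ), ∃ ν > (0 : ℝ),
        ∀ a b : EuclideanSpace ℝ (Fin 2),
          Real.sqrt (‖a‖ ^ 2 + ‖b‖ ^ 2) < ε →
          0 < F (a, b) - F (0, 0) → F (a, b) - F (0, 0) < ν →
          c * (F (a, b) - F (0, 0)) ^ θ ≤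
            Real.sqrt
              (∑ i, (fderiv ℝ F (a, b) (EuclideanSpace.single i 1, 0)) ^ 2 +
               ∑ i, (fderiv ℝ F (a, b) ((0 : EuclideanSpace ℝ (Fin 2)),
                  EuclideanSpace.single i 1)) ^ 2)) := by
  obtain ⟨hγ, -⟩ := hγ
  obtain ⟨-, hα⟩ := hα
  obtain rfl : F = hadamardF γ α := hF
  subst hβ
  have hα₁ : α ≠ 1 := hα.ne
  have hgap (t : ℝ) (ht : 0 < t) := hadamardF_axis_sub_origin hγ.ne' hα₁ ht.le
  have hgrad (t : ℝ) (ht : 0 < t) := sqrt_sum_sq_fderiv_hadamardF_axis hγ hα₁ ht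
  have hfderiv (t : ℝ) (ht : 0 < t) := (hasFDerivAt_hadamardF_axis γ hα₁ ht).fderiv
  have hexp := two_div_mul_one_add_one_sub_div_two hγ.ne' hα₁
  set q := 2 / (γ * (1 - α))
  have hq : 0 < q := by have := sub_pos.mpr hα; positivity
  refine ⟨fun p => ?_, fun t ht => ⟨hgap t ht, by simp [hfderiv t ht], by simp [hfderiv t ht],
    by simp [hfderiv t ht], by simp [hfderiv t ht], ?_⟩, ?_⟩
  · rw [hadamardF_origin hγ.ne' hα₁]
    exact hadamardF_nonneg hα.le p
  · rw [hgrad t ht, hgap t ht, inv_mul_cancel_left₀ (sub_pos.mpr hα).ne', ← Real.rpow_mul ht.le,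
      hexp]
  · rintro θ - hθ ⟨c, hc, ε, hε, ν, hν, hKL⟩
    obtain ⟨t, ht, htε, htν, hviolation⟩ := exists_pos_mul_rpow_sub_one_lt (B := 2 / γ)
      (sub_pos.mpr hα) hc hq (hexp ▸ mul_lt_mul_of_pos_left hθ hq) hε hν
    have hnorm : √(‖(WithLp.toLp 2 ![t, 0] : ℝ²)‖ ^ 2 + ‖(0 : ℝ²)‖ ^ 2) = t := by
      simp [EuclideanSpace.norm_eq, ht.le]
    have hKL_t := hKL _ 0 (hnorm ▸ htε) (hgap t ht ▸ by positivity) (hgap t ht ▸ htν)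
    rw [hgrad t ht, hgap t ht] at hKL_t
    linarith
end
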